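/- Let F be a standard Borel space, let m ∈ ℕ, and let G₁, …, G_m ⊆ F be measurable sets. Then the parallel-step relation {(S, T) ∈ Finset F × Finset F : ∃ x₁ ∈ G₁, …, x_m ∈ G_m with T = S ∪ {x₁, …, x_m}} is measurable in the product σ-algebra 𝔻 ⊗ 𝔻 of the instance space with itself. -/

import Mathlib

open MeasureTheory

/-- The canonical embedding of a database instance (a finite set of facts)
into the space of measures: `S ↦ ∑_{x ∈ S} δ_x`. -/
noncomputable def iota {F : Type*} [MeasurableSpace F] (S : Finset F) : Measure F :=
  ∑ x ∈ S, Measure.dirac x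

/-- The instance space `𝔻`: `Finset F` equipped with the σ-algebra comapped along `ι`
from the canonical σ-algebra on `Measure F`. -/
noncomputable instance instanceSpace (F : Type*) [MeasurableSpace F] : MeasurableSpace (Finset F) :=
  MeasurableSpace.comap iota inferInstance

/-!
A standard Borel space is countably separated, so it embeds measurably and injectively into
the Cantor space `ℕ → Bool`; the first `n` bits cut `F` into finitely many measurable cells, and
any finite set is separated by the cells of some level `n`. The counting maps `S ↦ ι S A` are
measurable on `𝔻`, so "`S ∩ A` is nonempty", "`S` has at most one point in each cell" and
(testing all levels) "`S ∩ A ⊆ T`" are measurable conditions. At a level that separates `T`, a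
witness `v` may be replaced by the cells `c i` its points lie in, which ranges over a countable
set; this writes the relation as a countable union of intersections of such conditions.
-/

open MeasurableSpace Function Filter Set
open scoped Finset

section FirstBits

variable {F : Type*} {f : F → ℕ → Bool}

def firstBits (f : F → ℕ → Bool) (n : ℕ) (x : F) : Fin n → Bool := fun k => f x k

lemma eventually_firstBits_ne (hf : Injective f) {x y : F} (hxy : x ≠ y) :
    ∀ᶠ n in atTop, firstBits f n x ≠ firstBits f n y := by
  obtain ⟨k, hk⟩ : ∃ k, f x k ≠ f y k := by
    by_contra! h
    exact hxy (hf (funext h))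
  filter_upwards [eventually_gt_atTop k] with n hn h
  exact hk (congr_fun h ⟨k, hn⟩)

lemma eventually_injOn_firstBits (hf : Injective f) (T : Finset F) :
    ∀ᶠ n in atTop, InjOn (firstBits f n) T := by
  have hpairs : ∀ p ∈ T ×ˢ T, ∀ᶠ n in atTop,
      firstBits f n p.1 = firstBits f n p.2 → p.1 = p.2 := fun p _ => by
      by_cases h : p.1 = p.2
      · exact .of_forall fun _ _ => h
      · exact (eventually_firstBits_ne hf h).mono fun _ hn heq => absurd heq hn
  filter_upwards [(eventually_all_finset _).2 hpairs] with n hn x hx y hy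
  exact hn (x, y) (Finset.mem_product.2 ⟨hx, hy⟩)

lemma exists_eq_union_image_iff [DecidableEq F] {m : ℕ} {G : Fin m → Set F} (hf : Injective f)
    {S T : Finset F} :
    (∃ v : Fin m → F, (∀ i, v i ∈ G i) ∧ T = S ∪ Finset.image v Finset.univ) ↔
      S ⊆ T ∧ ∃ n, ∃ c : Fin m → Fin n → Bool, InjOn (firstBits f n) T ∧
        (∀ i, ∃ x ∈ T, x ∈ G i ∩ firstBits f n ⁻¹' {c i}) ∧
        ∀ x ∈ T, x ∈ (firstBits f n ⁻¹' range c)ᶜ → x ∈ S := by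
  constructor
  · rintro ⟨v, hv, rfl⟩
    obtain ⟨n, hn⟩ := (eventually_injOn_firstBits hf (S ∪ Finset.image v Finset.univ)).exists
    have hvT (i : Fin m) : v i ∈ S ∪ Finset.image v Finset.univ :=
      Finset.mem_union_right _ (Finset.mem_image_of_mem _ (Finset.mem_univ i))
    refine ⟨Finset.subset_union_left, n, fun i => firstBits f n (v i), hn,
      fun i => ⟨v i, hvT i, hv i, rfl⟩, ?_⟩
    intro x hx hxc
    obtain hxS | hxv := Finset.mem_union.1 hx
    · exact hxS
    · obtain ⟨i, -, rfl⟩ := Finset.mem_image.1 hxv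
      exact absurd ⟨i, rfl⟩ hxc
  · rintro ⟨hST, n, c, hinj, hG, hcov⟩
    choose v hvT hvG using hG
    refine ⟨v, fun i => (hvG i).1, Finset.Subset.antisymm (fun x hx => ?_)
      (Finset.union_subset hST (Finset.image_subset_iff.2 fun i _ => hvT i))⟩
    by_cases hxc : firstBits f n x ∈ range c
    · obtain ⟨i, hi⟩ := hxc
      have hvx : v i = x := hinj (hvT i) hx ((hvG i).2.trans hi)
      exact Finset.mem_union_right _ (Finset.mem_image.2 ⟨i, Finset.mem_univ i, hvx⟩)
    · exact Finset.mem_union_left _ (hcov x hx hxc)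

end FirstBits

section InstanceSpace

variable {F : Type*} [MeasurableSpace F]

lemma measurable_firstBits {f : F → ℕ → Bool} (hf : Measurable f) (n : ℕ) :
    Measurable (firstBits f n) :=
  measurable_pi_lambda _ fun k => (measurable_pi_apply (k : ℕ)).comp hf

lemma measurable_iota : Measurable (iota : Finset F → Measure F) :=
  measurable_iff_comap_le.2 le_rfl

lemma iota_apply (S : Finset F) {A : Set F} (hA : MeasurableSet A) [DecidablePred (· ∈ A)] :
    iota S A = #{x ∈ S | x ∈ A} := by
  rw [iota, Measure.finsetSum_apply, Finset.card_filter, Nat.cast_sum]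
  refine Finset.sum_congr rfl fun x _ => ?_
  rw [Measure.dirac_apply' _ hA, indicator_apply]
  split_ifs <;> simp

lemma measurableSet_setOf_exists_mem {A : Set F} (hA : MeasurableSet A) :
    MeasurableSet {S : Finset F | ∃ x ∈ S, x ∈ A} := by
  classical
  have hset : {S : Finset F | ∃ x ∈ S, x ∈ A} = (fun S => iota S A) ⁻¹' {0}ᶜ := by
    ext S
    simp [iota_apply S hA]
  rw [hset]
  exact (Measure.measurable_coe hA).comp measurable_iota (measurableSet_singleton 0).compl

lemma measurableSet_setOf_injOn {β : Type*} [MeasurableSpace β] [MeasurableSingletonClass β]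
    [Countable β] {g : F → β} (hg : Measurable g) :
    MeasurableSet {S : Finset F | InjOn g S} := by
  classical
  have hset : {S : Finset F | InjOn g S} = ⋂ b, (fun S => iota S (g ⁻¹' {b})) ⁻¹' Iic 1 := by
    ext S
    simp only [mem_ofPred_eq, mem_iInter, mem_preimage, mem_Iic,
      iota_apply S (hg (measurableSet_singleton _)), Nat.cast_le_one, Finset.card_le_one,
      Finset.mem_filter, mem_singleton_iff]
    exact ⟨fun h b x hx y hy => h hx.1 hy.1 (hx.2.trans hy.2.symm),
      fun h x hx y hy hxy => h (g y) x ⟨hx, hxy⟩ y ⟨hy, rfl⟩⟩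
  rw [hset]
  exact .iInter fun b => (Measure.measurable_coe (hg (measurableSet_singleton b))).comp
    measurable_iota measurableSet_Iic

lemma measurableSet_setOf_forall_mem_imp_mem [CountablySeparated F] {A : Set F}
    (hA : MeasurableSet A) :
    MeasurableSet {p : Finset F × Finset F | ∀ x ∈ p.1, x ∈ A → x ∈ p.2} := by
  obtain ⟨f, hf, hf_inj⟩ := measurable_injection_nat_bool_of_countablySeparated F
  have hset : {p : Finset F × Finset F | ∀ x ∈ p.1, x ∈ A → x ∈ p.2} =
      ⋂ n, ⋂ b : Fin n → Bool, {p | (∃ x ∈ p.1, x ∈ A ∩ firstBits f n ⁻¹' {b}) →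
        ∃ x ∈ p.2, x ∈ firstBits f n ⁻¹' {b}} := by
    ext ⟨S, T⟩
    simp only [mem_ofPred_eq, mem_iInter, mem_inter_iff, mem_preimage]
    refine ⟨fun h n _ ⟨x, hxS, hxA, hxb⟩ => ⟨x, h x hxS hxA, hxb⟩,
      fun h x hxS hxA => ?_⟩
    by_contra hxT
    obtain ⟨n, hn⟩ := ((eventually_all_finset T).2 fun y hy =>
      eventually_firstBits_ne hf_inj (ne_of_mem_of_not_mem hy hxT)).exists
    obtain ⟨y, hyT, hy⟩ := h n _ ⟨x, hxS, hxA, rfl⟩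
    exact hn y hyT hy
  rw [hset]
  have hcell (n : ℕ) (b : Fin n → Bool) : MeasurableSet (firstBits f n ⁻¹' {b}) :=
    measurable_firstBits hf n (.singleton b)
  exact .iInter fun n => .iInter fun b => MeasurableSet.imp
    (measurable_fst (measurableSet_setOf_exists_mem (hA.inter (hcell n b))))
    (measurable_snd (measurableSet_setOf_exists_mem (hcell n b)))

end InstanceSpace

/-- For measurable sets of facts `G₁, …, G_m ⊆ F`, the parallel-step relation
`{(S, T) : ∃ x₁ ∈ G₁, …, x_m ∈ G_m, T = S ∪ {x₁, …, x_m}}` is measurable in the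
product σ-algebra `𝔻 ⊗ 𝔻` of the instance space with itself. -/
theorem measurableSet_parallelStepRelation (F : Type*) [MeasurableSpace F]
    [StandardBorelSpace F] [DecidableEq F] (m : ℕ)
    (G : Fin m → Set F) (hG : ∀ i, MeasurableSet (G i)) :
    MeasurableSet
      {p : Finset F × Finset F | ∃ v : Fin m → F,
        (∀ i, v i ∈ G i) ∧ p.2 = p.1 ∪ Finset.image v Finset.univ} := by
  obtain ⟨f, hf, hf_inj⟩ := measurable_injection_nat_bool_of_countablySeparated F
  have hcell (n : ℕ) (s : Set (Fin n → Bool)) : MeasurableSet (firstBits f n ⁻¹' s) :=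
    measurable_firstBits hf n .of_discrete
  have hrel : {p : Finset F × Finset F | ∃ v : Fin m → F,
        (∀ i, v i ∈ G i) ∧ p.2 = p.1 ∪ Finset.image v Finset.univ} =
      {p | p.1 ⊆ p.2} ∩ ⋃ n, ⋃ c : Fin m → Fin n → Bool,
        {p | InjOn (firstBits f n) p.2} ∩
        (⋂ i, {p | ∃ x ∈ p.2, x ∈ G i ∩ firstBits f n ⁻¹' {c i}}) ∩
        {p | ∀ x ∈ p.2, x ∈ (firstBits f n ⁻¹' range c)ᶜ → x ∈ p.1} := by
    ext p
    simp only [mem_ofPred_eq, mem_inter_iff, mem_iUnion, mem_iInter,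
      exists_eq_union_image_iff hf_inj, and_assoc]
  rw [hrel]
  have hsub : MeasurableSet {p : Finset F × Finset F | p.1 ⊆ p.2} := by
    simpa [Finset.subset_iff] using measurableSet_setOf_forall_mem_imp_mem (F := F) .univ
  refine hsub.inter (.iUnion fun n => .iUnion fun c => .inter (.inter ?_ ?_) ?_)
  · exact measurable_snd (measurableSet_setOf_injOn (measurable_firstBits hf n))
  · exact .iInter fun i =>
      measurable_snd (measurableSet_setOf_exists_mem ((hG i).inter (hcell n _)))
  · exact measurable_swap (measurableSet_setOf_forall_mem_imp_mem (hcell n _).compl)
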